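/- Let V be a finite-dimensional real inner product space and R : Λ²V → Λ²V a self-adjoint linear map satisfying the first Bianchi identity. Suppose V = ⊕ᵢ Vᵢ is an orthogonal decomposition with each Vᵢ invariant under every endomorphism in the image of R. Then for X₁, X₂ ∈ Vᵢ and Y ∈ Vⱼ with j ≠ i, one has R(X₁∧X₂)Y = 0; that is, R(Λ²Vᵢ) ⊆ Λ²Vᵢ. -/

import Mathlib

/-!
Pair symmetry turns `⟪R(X∧Y)Z, W⟫` into `⟪R(Z∧W)X, Y⟫`, which vanishes when `X` and `Y` lie in
different blocks, because `R(Z∧W)` preserves the block of `X`. Hence `R(X∧Y) = 0` across blocks,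
and the Bianchi identity `R(X₁∧X₂)Y = -R(X₂∧Y)X₁ - R(Y∧X₁)X₂` leaves nothing of `R(X₁∧X₂)Y`.
-/

open scoped RealInnerProductSpace

theorem curvature_eq_zero_of_isOrtho
    {V : Type*} [NormedAddCommGroup V] [InnerProductSpace ℝ V]
    {R : V →ₗ[ℝ] V →ₗ[ℝ] V →ₗ[ℝ] V} (hpair : ∀ X Y Z W : V, ⟪R X Y Z, W⟫ = ⟪R Z W X, Y⟫)
    {U W : Submodule ℝ V} (hUW : U ⟂ W) (hU : ∀ Z T : V, U.map (R Z T) ≤ U)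
    {X Y : V} (hX : X ∈ U) (hY : Y ∈ W) :
    R X Y = 0 := by
  ext Z
  refine inner_self_eq_zero (𝕜 := ℝ).mp ?_
  rw [hpair]
  exact Submodule.isOrtho_iff_inner_eq.mp hUW _ (hU Z _ (Submodule.mem_map_of_mem hX)) Y hY

theorem curvature_operator_diagonal_block
    {V : Type*} [NormedAddCommGroup V] [InnerProductSpace ℝ V]
    {ι : Type*} (Vs : ι → Submodule ℝ V)
    (R : V →ₗ[ℝ] V →ₗ[ℝ] (V →ₗ[ℝ] V))
    (hpair : ∀ X Y Z W : V, ⟪R X Y Z, W⟫ = ⟪R Z W X, Y⟫)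
    (hbianchi : ∀ X Y Z : V, R X Y Z + R Y Z X + R Z X Y = 0)
    (hortho : ∀ i j, i ≠ j → ∀ x ∈ Vs i, ∀ y ∈ Vs j, ⟪x, y⟫ = 0)
    (hinv : ∀ i (X Y : V), (Vs i).map (R X Y) ≤ Vs i)
    {i j : ι} (hij : j ≠ i) {X₁ X₂ Y : V}
    (hX₁ : X₁ ∈ Vs i) (hX₂ : X₂ ∈ Vs i) (hY : Y ∈ Vs j) :
    R X₁ X₂ Y = 0 := by
  have hij_ortho : Vs i ⟂ Vs j := Submodule.isOrtho_iff_inner_eq.mpr (hortho i j hij.symm)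
  have hji_ortho : Vs j ⟂ Vs i := Submodule.isOrtho_iff_inner_eq.mpr (hortho j i hij)
  have h₂ : R X₂ Y = 0 := curvature_eq_zero_of_isOrtho hpair hij_ortho (hinv i) hX₂ hY
  have h₁ : R Y X₁ = 0 := curvature_eq_zero_of_isOrtho hpair hji_ortho (hinv j) hY hX₁
  simpa [h₁, h₂] using hbianchi X₁ X₂ Y
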